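/- Let S be a Foulis semigroup and s ∈ S a self-adjoint idempotent. The set K_s = {s·⟦t·s⟧ : t ∈ S}, ordered by k₁ ≤ k₂ iff k₁ = k₂·k₁, with top element s, orthocomplement k^⊥ = s·⟦k⟧, and meet k₁ ∧ k₂ = (k₁·⟦⟦k₂⟧·k₁⟧)^⊥⊥, is an orthomodular lattice. In particular every element of K_s is a self-adjoint idempotent. -/
import Mathlib

class Ortholattice (α : Type*) extends Lattice α, BoundedOrder α where
  ocompl : α → α
  ocompl_ocompl : ∀ x : α, ocompl (ocompl x) = x
  ocompl_antitone : ∀ x y : α, x ≤ y → ocompl y ≤ ocompl x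
  inf_ocompl : ∀ x : α, x ⊓ ocompl x = ⊥

postfix:max "ᗮ" => Ortholattice.ocompl

class OrthomodularLattice (α : Type*) extends Ortholattice α where
  orthomodular : ∀ x y : α, x ≤ y → y = x ⊔ (xᗮ ⊓ y)

/-- A Foulis semigroup (Baer *-semigroup): an involutive monoid with an
operation ⟦-⟧ (here `proj`) such that each ⟦s⟧ is a self-adjoint idempotent,
0 := ⟦1⟧ is a two-sided zero, and s·x = 0 iff x factors through ⟦s⟧. -/
class FoulisSemigroup (S : Type*) extends Monoid S where
  dag : S → S
  dag_one : dag 1 = 1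
  dag_mul : ∀ s t : S, dag (s * t) = dag t * dag s
  dag_dag : ∀ s : S, dag (dag s) = s
  proj : S → S
  proj_idem : ∀ s : S, proj s * proj s = proj s
  proj_dag : ∀ s : S, dag (proj s) = proj s
  zero_mul' : ∀ s : S, proj 1 * s = proj 1
  mul_zero' : ∀ s : S, s * proj 1 = proj 1
  proj_spec : ∀ s x : S, s * x = proj 1 ↔ ∃ y : S, x = proj s * y

namespace FoulisKernel
open FoulisSemigroup

variable {S : Type*} [FoulisSemigroup S]

lemma dagZ : dag (proj (1:S)) = proj 1 := proj_dag 1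

lemma mulP (x : S) : x * proj x = proj 1 :=
  (proj_spec x (proj x)).2 ⟨proj x, (proj_idem x).symm⟩

lemma Pmul_dag (x : S) : proj x * dag x = proj 1 := by
  have h := congrArg dag (mulP x)
  rwa [dag_mul, proj_dag, dagZ] at h

lemma eqP {x y : S} (h : x * y = proj 1) : y = proj x * y := by
  obtain ⟨z, hz⟩ := (proj_spec x y).1 h
  rw [hz, ← mul_assoc, proj_idem]

lemma projZ : proj (proj (1:S)) = 1 := by
  have h : proj (1:S) * 1 = proj 1 := zero_mul' 1
  have h2 := eqP h
  rwa [mul_one, eq_comm] at h2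

lemma starComm {e B : S} (hed : dag e = e) (hB : B * e = B) :
    e * proj B = proj B * e := by
  have h0 : B * (e * proj B) = proj 1 := by rw [← mul_assoc, hB, mulP]
  have h1 : e * proj B = proj B * (e * proj B) := eqP h0
  have h2 : dag (e * proj B) = proj B * e := by rw [dag_mul, proj_dag, hed]
  have h3 := congrArg dag h1
  rw [h2, dag_mul, proj_dag, h2] at h3
  -- h3 : proj B * e = proj B * e * proj B
  conv_rhs => rw [h3]
  rw [mul_assoc, ← h1]

lemma starDag {e B : S} (hed : dag e = e) (hB : B * e = B) :
    dag (e * proj B) = e * proj B := by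
  rw [dag_mul, proj_dag, hed, ← starComm hed hB]

lemma starIdem {e B : S} (he : e * e = e) (hed : dag e = e) (hB : B * e = B) :
    (e * proj B) * (e * proj B) = e * proj B := by
  calc (e * proj B) * (e * proj B) = e * ((proj B * e) * proj B) := by
        rw [mul_assoc, ← mul_assoc (proj B)]
    _ = e * ((e * proj B) * proj B) := by rw [← starComm hed hB]
    _ = (e * e) * (proj B * proj B) := by rw [mul_assoc, ← mul_assoc, ← mul_assoc]
    _ = e * proj B := by rw [he, proj_idem]


section Kern
variable {S : Type*} [FoulisSemigroup S]

def IsK (s : S) (k : S) : Prop := ∃ B : S, B * s = B ∧ k = s * proj B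

variable {s : S}

lemma isK_iff (hs : s * s = s) {k : S} :
    (∃ t : S, k = s * proj (t * s)) ↔ IsK s k := by
  constructor
  · rintro ⟨t, ht⟩
    exact ⟨t * s, by rw [mul_assoc, hs], ht⟩
  · rintro ⟨B, h1, h2⟩
    exact ⟨B, by rw [h1]; exact h2⟩

lemma kDag (hsd : dag s = s) {k : S} (hk : IsK s k) : dag k = k := by
  obtain ⟨B, hB, rfl⟩ := hk; exact starDag hsd hB

lemma kIdem (hs : s * s = s) (hsd : dag s = s) {k : S} (hk : IsK s k) :
    k * k = k := by
  obtain ⟨B, hB, rfl⟩ := hk; exact starIdem hs hsd hB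

lemma sMulK (hs : s * s = s) {k : S} (hk : IsK s k) : s * k = k := by
  obtain ⟨B, hB, rfl⟩ := hk; rw [← mul_assoc, hs]

lemma kMulS (hs : s * s = s) (hsd : dag s = s) {k : S} (hk : IsK s k) :
    k * s = k := by
  obtain ⟨B, hB, rfl⟩ := hk
  rw [mul_assoc, ← starComm hsd hB, ← mul_assoc, hs]

lemma oc_isK {x : S} (hx : x * s = x) : IsK s (s * proj x) := ⟨x, hx, rfl⟩

lemma mul_oc {x : S} (hx : x * s = x) : x * (s * proj x) = proj 1 := by
  rw [← mul_assoc, hx, mulP]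

lemma oc_dag (hsd : dag s = s) {x : S} (hx : x * s = x) :
    dag (s * proj x) = s * proj x := starDag hsd hx

lemma oc_mul (hsd : dag s = s) {x : S} (hx : x * s = x) (hxd : dag x = x) :
    (s * proj x) * x = proj 1 := by
  have h := congrArg dag (mul_oc hx)
  rwa [dag_mul, dagZ, oc_dag hsd hx, hxd] at h

lemma galois (hs : s * s = s) (hsd : dag s = s) {x j : S} (hx : x * s = x)
    (hj : IsK s j) : x * j = proj 1 ↔ j = (s * proj x) * j := by
  constructor
  · intro h
    have h2 := eqP h
    calc j = s * j := (sMulK hs hj).symm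
      _ = s * (proj x * j) := by rw [← h2]
      _ = (s * proj x) * j := by simp only [mul_assoc]
  · intro h
    calc x * j = x * ((s * proj x) * j) := by rw [← h]
      _ = (x * (s * proj x)) * j := by simp only [mul_assoc]
      _ = proj 1 * j := by rw [mul_oc hx]
      _ = proj 1 := zero_mul' j

lemma closureC (hs : s * s = s) (hsd : dag s = s) {k : S} (hk : IsK s k) :
    s * proj (s * proj k) = k := by
  obtain ⟨B, hB, hkB⟩ := hk
  have hks : k * s = k := kMulS hs hsd ⟨B, hB, hkB⟩
  have hkd : dag k = k := kDag hsd ⟨B, hB, hkB⟩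
  have f3 : s * proj k = proj k * s := starComm hsd hks
  have f4 : B * k = proj 1 := by rw [hkB, ← mul_assoc, hB, mulP]
  have f5 : k * dag B = proj 1 := by
    have h := congrArg dag f4
    rwa [dag_mul, hkd, dagZ] at h
  have f6 : dag B = proj k * dag B := eqP f5
  have f7 : B = B * proj k := by
    have h := congrArg dag f6
    rwa [dag_mul, dag_dag, proj_dag] at h
  have f8 : B * proj (proj k) = proj 1 := by
    rw [f7, mul_assoc, mulP, mul_zero']
  have f9 : (s * proj k) * proj (s * proj k) = proj 1 := mulP _
  have f10 : proj k * (s * proj (s * proj k)) = proj 1 := by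
    rw [← mul_assoc, ← f3]
    exact f9
  have f11 : s * proj (s * proj k) = proj (proj k) * (s * proj (s * proj k)) :=
    eqP f10
  have f12 : B * proj (s * proj k) = proj 1 := by
    calc B * proj (s * proj k) = (B * s) * proj (s * proj k) := by rw [hB]
      _ = B * (s * proj (s * proj k)) := by simp only [mul_assoc]
      _ = B * (proj (proj k) * (s * proj (s * proj k))) := by rw [← f11]
      _ = (B * proj (proj k)) * (s * proj (s * proj k)) := by
            simp only [mul_assoc]
      _ = proj 1 := by rw [f8, zero_mul']
  have f13 : proj (s * proj k) = proj B * proj (s * proj k) := eqP f12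
  have f15 : (s * proj k) * k = proj 1 := oc_mul hsd hks hkd
  have f16 : k = proj (s * proj k) * k := eqP f15
  have f17 : k = k * proj (s * proj k) := by
    have h := congrArg dag f16
    rwa [dag_mul, proj_dag, hkd] at h
  calc s * proj (s * proj k) = s * (proj B * proj (s * proj k)) := by rw [← f13]
    _ = (s * proj B) * proj (s * proj k) := by simp only [mul_assoc]
    _ = k * proj (s * proj k) := by rw [← hkB]
    _ = k := f17.symm

lemma lemE (hsd : dag s = s) {k : S} (hk : IsK s k) :
    s * proj (proj k) = k := by
  obtain ⟨B, hB, hkB⟩ := hk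
  have hkd : dag k = k := kDag hsd ⟨B, hB, hkB⟩
  have f2 : proj k * k = proj 1 := by
    have h := congrArg dag (mulP k)
    rwa [dag_mul, proj_dag, hkd, dagZ] at h
  have fk : k = proj (proj k) * k := eqP f2
  have fk2 : k = k * proj (proj k) := by
    have h := congrArg dag fk
    rwa [dag_mul, proj_dag, hkd] at h
  have f4 : B * k = proj 1 := by rw [hkB, ← mul_assoc, hB, mulP]
  have f5 : k * dag B = proj 1 := by
    have h := congrArg dag f4
    rwa [dag_mul, hkd, dagZ] at h
  have f7 : B = B * proj k := by
    have h := congrArg dag (eqP f5)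
    rwa [dag_mul, dag_dag, proj_dag] at h
  have f8 : B * proj (proj k) = proj 1 := by
    rw [f7, mul_assoc, mulP, mul_zero']
  have f13 : proj (proj k) = proj B * proj (proj k) := eqP f8
  calc s * proj (proj k) = s * (proj B * proj (proj k)) := by rw [← f13]
    _ = (s * proj B) * proj (proj k) := by simp only [mul_assoc]
    _ = k * proj (proj k) := by rw [← hkB]
    _ = k := fk2.symm


lemma le_oc_iff (hs : s * s = s) (hsd : dag s = s) {j k : S}
    (hj : IsK s j) (hk : IsK s k) :
    j = (s * proj k) * j ↔ k * j = proj 1 :=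
  (galois hs hsd (kMulS hs hsd hk) hj).symm

lemma antitone' (hs : s * s = s) (hsd : dag s = s) {j k : S}
    (hj : IsK s j) (hk : IsK s k) (h : j = k * j) :
    s * proj k = (s * proj j) * (s * proj k) := by
  have hjk : j = j * k := by
    have hd := congrArg dag h
    rwa [dag_mul, kDag hsd hj, kDag hsd hk] at hd
  have h0 : j * (s * proj k) = proj 1 := by
    calc j * (s * proj k) = (j * s) * proj k := by simp only [mul_assoc]
      _ = (j * k) * proj k := by rw [kMulS hs hsd hj, ← hjk]
      _ = j * (k * proj k) := by simp only [mul_assoc]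
      _ = proj 1 := by rw [mulP, mul_zero']
  exact (galois hs hsd (kMulS hs hsd hj) (oc_isK (kMulS hs hsd hk))).1 h0

lemma le_iff_zero (hs : s * s = s) (hsd : dag s = s) {j k : S}
    (hj : IsK s j) (hk : IsK s k) :
    j = k * j ↔ (s * proj k) * j = proj 1 := by
  constructor
  · intro h
    calc (s * proj k) * j = (s * proj k) * (k * j) := by rw [← h]
      _ = ((s * proj k) * k) * j := by simp only [mul_assoc]
      _ = proj 1 := by rw [oc_mul hsd (kMulS hs hsd hk) (kDag hsd hk), zero_mul']
  · intro h
    have hoc : IsK s (s * proj k) := oc_isK (kMulS hs hsd hk)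
    have h2 := (galois hs hsd (kMulS hs hsd hoc) hj).1 h
    rwa [closureC hs hsd hk] at h2

lemma commK (hs : s * s = s) (hsd : dag s = s) {a b : S}
    (ha : IsK s a) (hb : IsK s b) (hab : a * b = b * a) :
    s * proj (s * proj (a * b)) = a * b ∧ IsK s (a * b) := by
  set x := a * b with hx
  have had : dag a = a := kDag hsd ha
  have hbd : dag b = b := kDag hsd hb
  have hxd : dag x = x := by rw [hx, dag_mul, hbd, had, ← hab]
  have hxs : x * s = x := by rw [hx, mul_assoc, kMulS hs hsd hb]
  have hsx : s * x = x := by rw [hx, ← mul_assoc, sMulK hs ha]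
  have hqs : s * proj x = proj x * s := starComm hsd hxs
  have hBs : (s * proj x) * s = s * proj x := by
    rw [mul_assoc, ← hqs, ← mul_assoc, hs]
  have hg : IsK s (s * proj (s * proj x)) := oc_isK hBs
  set g := s * proj (s * proj x) with hgdef
  have step2 : (s * proj x) * x = proj 1 := oc_mul hsd hxs hxd
  have step3 : x = proj (s * proj x) * x := eqP step2
  have step4 : g * x = x := by
    rw [hgdef, mul_assoc, ← step3, hsx]
  -- a-side
  have s6 : x * proj a = proj 1 := by
    calc x * proj a = (b * a) * proj a := by rw [hab]
      _ = b * (a * proj a) := by simp only [mul_assoc]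
      _ = proj 1 := by rw [mulP, mul_zero']
  have s7 : proj a = proj x * proj a := eqP s6
  have s8 : proj a * proj x = proj a := by
    have h := congrArg dag s7
    rwa [dag_mul, proj_dag, proj_dag, eq_comm] at h
  have s9 : proj x * g = proj 1 := by
    calc proj x * g = (proj x * s) * proj (s * proj x) := by
          rw [hgdef]; simp only [mul_assoc]
      _ = (s * proj x) * proj (s * proj x) := by rw [← hqs]
      _ = proj 1 := mulP _
  have s10 : proj a * g = proj 1 := by
    calc proj a * g = (proj a * proj x) * g := by rw [s8]
      _ = proj a * (proj x * g) := by simp only [mul_assoc]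
      _ = proj 1 := by rw [s9, mul_zero']
  have s11 : g = proj (proj a) * g := eqP s10
  have s12 : a * g = g := by
    calc a * g = (s * proj (proj a)) * g := by rw [lemE hsd ha]
      _ = s * (proj (proj a) * g) := by simp only [mul_assoc]
      _ = s * g := by rw [← s11]
      _ = g := sMulK hs hg
  -- b-side
  have t6 : x * proj b = proj 1 := by
    calc x * proj b = a * (b * proj b) := by rw [hx, mul_assoc]
      _ = proj 1 := by rw [mulP, mul_zero']
  have t7 : proj b = proj x * proj b := eqP t6
  have t8 : proj b * proj x = proj b := by
    have h := congrArg dag t7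
    rwa [dag_mul, proj_dag, proj_dag, eq_comm] at h
  have t10 : proj b * g = proj 1 := by
    calc proj b * g = (proj b * proj x) * g := by rw [t8]
      _ = proj b * (proj x * g) := by simp only [mul_assoc]
      _ = proj 1 := by rw [s9, mul_zero']
  have t11 : g = proj (proj b) * g := eqP t10
  have t12 : b * g = g := by
    calc b * g = (s * proj (proj b)) * g := by rw [lemE hsd hb]
      _ = s * (proj (proj b) * g) := by simp only [mul_assoc]
      _ = s * g := by rw [← t11]
      _ = g := sMulK hs hg
  have s13 : x * g = g := by
    calc x * g = a * (b * g) := by rw [hx, mul_assoc]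
      _ = g := by rw [t12, s12]
  have s14 : g = g * x := by
    have h := congrArg dag s13
    rwa [dag_mul, hxd, kDag hsd hg, eq_comm] at h
  have hgx : g = x := by rw [s14, step4]
  exact ⟨hgx, hgx ▸ hg⟩


lemma antisymK (hsd : dag s = s) {j k : S} (hj : IsK s j) (hk : IsK s k)
    (h1 : j = k * j) (h2 : k = j * k) : j = k := by
  have h := congrArg dag h1
  rw [dag_mul, kDag hsd hj, kDag hsd hk] at h
  -- h : j = j * k
  rw [h, ← h2]

lemma meet_aux (hs : s * s = s) (hsd : dag s = s) {a b : S}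
    (ha : IsK s a) (hb : IsK s b) :
    IsK s (a * proj (proj b * a))
    ∧ s * proj (s * proj (a * proj (proj b * a))) = a * proj (proj b * a)
    ∧ a * proj (proj b * a) = a * (a * proj (proj b * a))
    ∧ a * proj (proj b * a) = b * (a * proj (proj b * a))
    ∧ ∀ j : S, IsK s j → j = a * j → j = b * j →
        j = (a * proj (proj b * a)) * j := by
  have had : dag a = a := kDag hsd ha
  have hbd : dag b = b := kDag hsd hb
  have haa : a * a = a := kIdem hs hsd ha
  have hbb : b * b = b := kIdem hs hsd hb
  have hBa : (proj b * a) * a = proj b * a := by rw [mul_assoc, haa]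
  have hBs : (proj b * a) * s = proj b * a := by rw [mul_assoc, kMulS hs hsd ha]
  have hcomm : a * proj (proj b * a) = proj (proj b * a) * a := starComm had hBa
  have hx1 : a * proj (proj b * a) = a * (s * proj (proj b * a)) := by
    rw [← mul_assoc, kMulS hs hsd ha]
  have hx2 : (s * proj (proj b * a)) * a = a * proj (proj b * a) := by
    rw [mul_assoc, ← hcomm, ← mul_assoc, sMulK hs ha]
  have hcomm2 : a * (s * proj (proj b * a)) = (s * proj (proj b * a)) * a := by
    rw [← hx1, hx2]
  have hj' : IsK s (s * proj (proj b * a)) := oc_isK hBs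
  have hck := commK hs hsd ha hj' hcomm2
  rw [← hx1] at hck
  have memb : IsK s (a * proj (proj b * a)) := hck.2
  refine ⟨memb, hck.1, ?_, ?_, ?_⟩
  · rw [← mul_assoc, haa]
  · have h0 : proj b * (a * proj (proj b * a)) = proj 1 := by
      rw [← mul_assoc, mulP]
    have h1 : (s * proj b) * (a * proj (proj b * a)) = proj 1 := by
      rw [mul_assoc, h0, mul_zero']
    exact (le_iff_zero hs hsd memb hb).2 h1
  · intro j hj hja hjb
    have hPb : proj b * b = proj 1 := by
      have h := congrArg dag (mulP b)
      rwa [dag_mul, proj_dag, hbd, dagZ] at h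
    have hPbj : proj b * j = proj 1 := by
      conv_lhs => rw [hjb, ← mul_assoc, hPb]
      exact zero_mul' j
    have hBj : (proj b * a) * j = proj 1 := by
      calc (proj b * a) * j = proj b * (a * j) := by simp only [mul_assoc]
        _ = proj b * j := by rw [← hja]
        _ = proj 1 := hPbj
    have hj2 : j = proj (proj b * a) * j := eqP hBj
    calc j = a * j := hja
      _ = a * (proj (proj b * a) * j) := by rw [← hj2]
      _ = (a * proj (proj b * a)) * j := by simp only [mul_assoc]

end Kern

section Inst
variable {S : Type*} [FoulisSemigroup S]

def memK (s : S) (hs : s * s = s) (k : {k : S // ∃ t : S, k = s * proj (t * s)}) :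
    IsK s (k : S) := (isK_iff hs).1 k.2

def mkK (s : S) (hs : s * s = s) (x : S) (hx : IsK s x) :
    {k : S // ∃ t : S, k = s * proj (t * s)} := ⟨x, (isK_iff hs).2 hx⟩

@[simp] lemma coe_mkK (s : S) (hs : s * s = s) (x : S) (hx : IsK s x) :
    ((mkK s hs x hx : {k : S // ∃ t : S, k = s * proj (t * s)}) : S) = x := rfl

def ocK (s : S) (hs : s * s = s) (hsd : dag s = s)
    (k : {k : S // ∃ t : S, k = s * proj (t * s)}) :
    {k : S // ∃ t : S, k = s * proj (t * s)} :=
  mkK s hs (s * proj (k : S)) (oc_isK (kMulS hs hsd (memK s hs k)))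

@[simp] lemma coe_ocK (s : S) (hs : s * s = s) (hsd : dag s = s)
    (k : {k : S // ∃ t : S, k = s * proj (t * s)}) :
    ((ocK s hs hsd k) : S) = s * proj (k : S) := rfl

def infK (s : S) (hs : s * s = s) (hsd : dag s = s)
    (a b : {k : S // ∃ t : S, k = s * proj (t * s)}) :
    {k : S // ∃ t : S, k = s * proj (t * s)} :=
  mkK s hs ((a : S) * proj (proj (b : S) * (a : S)))
    (meet_aux hs hsd (memK s hs a) (memK s hs b)).1

@[simp] lemma coe_infK (s : S) (hs : s * s = s) (hsd : dag s = s)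
    (a b : {k : S // ∃ t : S, k = s * proj (t * s)}) :
    ((infK s hs hsd a b) : S) = (a : S) * proj (proj (b : S) * (a : S)) := rfl


variable (s : S) (hs : s * s = s) (hsd : dag s = s)

def foulisLat : Lattice {k : S // ∃ t : S, k = s * proj (t * s)} where
  le a b := (a : S) = (b : S) * (a : S)
  le_refl a := (kIdem hs hsd (memK s hs a)).symm
  le_trans a b c hab hbc := by
    show (a : S) = (c : S) * (a : S)
    calc (a : S) = (b : S) * (a : S) := hab
      _ = ((c : S) * (b : S)) * (a : S) := by rw [← hbc]
      _ = (c : S) * ((b : S) * (a : S)) := by simp only [mul_assoc]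
      _ = (c : S) * (a : S) := by rw [← hab]
  le_antisymm a b hab hba :=
    Subtype.ext (antisymK hsd (memK s hs a) (memK s hs b) hab hba)
  inf a b := infK s hs hsd a b
  inf_le_left a b :=
    (meet_aux hs hsd (memK s hs a) (memK s hs b)).2.2.1
  inf_le_right a b :=
    (meet_aux hs hsd (memK s hs a) (memK s hs b)).2.2.2.1
  le_inf a b c h1 h2 :=
    (meet_aux hs hsd (memK s hs b) (memK s hs c)).2.2.2.2 (a : S)
      (memK s hs a) h1 h2
  sup a b := ocK s hs hsd (infK s hs hsd (ocK s hs hsd a) (ocK s hs hsd b))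
  le_sup_left a b := by
    show (a : S) = (s * proj ((infK s hs hsd (ocK s hs hsd a) (ocK s hs hsd b) : S))) * (a : S)
    have h1 := (meet_aux hs hsd (memK s hs (ocK s hs hsd a))
      (memK s hs (ocK s hs hsd b))).2.2.1
    have h2 := antitone' hs hsd
      (memK s hs (infK s hs hsd (ocK s hs hsd a) (ocK s hs hsd b)))
      (memK s hs (ocK s hs hsd a)) h1
    rw [coe_ocK, closureC hs hsd (memK s hs a)] at h2
    rw [coe_infK] at h2 ⊢
    exact h2
  le_sup_right a b := by
    show (b : S) = (s * proj ((infK s hs hsd (ocK s hs hsd a) (ocK s hs hsd b) : S))) * (b : S)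
    have h1 := (meet_aux hs hsd (memK s hs (ocK s hs hsd a))
      (memK s hs (ocK s hs hsd b))).2.2.2.1
    have h2 := antitone' hs hsd
      (memK s hs (infK s hs hsd (ocK s hs hsd a) (ocK s hs hsd b)))
      (memK s hs (ocK s hs hsd b)) h1
    rw [coe_ocK, closureC hs hsd (memK s hs b)] at h2
    rw [coe_infK] at h2 ⊢
    exact h2
  sup_le a b c h1 h2 := by
    show (s * proj ((infK s hs hsd (ocK s hs hsd a) (ocK s hs hsd b) : S)))
      = (c : S) * (s * proj ((infK s hs hsd (ocK s hs hsd a) (ocK s hs hsd b) : S)))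
    have hoa := antitone' hs hsd (memK s hs a) (memK s hs c) h1
    have hob := antitone' hs hsd (memK s hs b) (memK s hs c) h2
    have h3 := (meet_aux hs hsd (memK s hs (ocK s hs hsd a))
      (memK s hs (ocK s hs hsd b))).2.2.2.2 (s * proj (c : S))
      (oc_isK (kMulS hs hsd (memK s hs c)))
      (by rw [coe_ocK]; exact hoa) (by rw [coe_ocK]; exact hob)
    have h4 := antitone' hs hsd (oc_isK (kMulS hs hsd (memK s hs c)))
      (memK s hs (infK s hs hsd (ocK s hs hsd a) (ocK s hs hsd b))) h3
    rw [closureC hs hsd (memK s hs c)] at h4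
    exact h4
def foulisOML : OrthomodularLattice {k : S // ∃ t : S, k = s * proj (t * s)} := by
  letI L : Lattice {k : S // ∃ t : S, k = s * proj (t * s)} := foulisLat s hs hsd
  exact {
  toLattice := L
  top := ⟨s, ⟨proj s, by
    have hps : proj s * s = proj 1 := by
      have h := Pmul_dag s; rwa [hsd] at h
    rw [hps, projZ, mul_one]⟩⟩
  le_top := fun a => (sMulK hs (memK s hs a)).symm
  bot := ⟨proj 1, ⟨1, by rw [one_mul]; exact (mulP s).symm⟩⟩
  bot_le := fun a => (mul_zero' _).symm
  ocompl := ocK s hs hsd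
  ocompl_ocompl := fun k => Subtype.ext (closureC hs hsd (memK s hs k))
  ocompl_antitone := fun a b h => antitone' hs hsd (memK s hs a) (memK s hs b) h
  inf_ocompl := fun k => by
    apply Subtype.ext
    have h1 := (meet_aux hs hsd (memK s hs k) (memK s hs (ocK s hs hsd k))).2.2.1
    have h2 := (meet_aux hs hsd (memK s hs k) (memK s hs (ocK s hs hsd k))).2.2.2.1
    rw [coe_ocK] at h1 h2
    show (k : S) * proj (proj ((ocK s hs hsd k : S)) * (k : S)) = proj 1
    rw [coe_ocK]
    set x := (k : S) * proj (proj (s * proj (k : S)) * (k : S)) with hxdef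
    calc x = (k : S) * x := h1
      _ = (k : S) * ((s * proj (k : S)) * x) := by rw [← h2]
      _ = (((k : S) * s) * proj (k : S)) * x := by simp only [mul_assoc]
      _ = ((k : S) * proj (k : S)) * x := by rw [kMulS hs hsd (memK s hs k)]
      _ = proj 1 * x := by rw [mulP]
      _ = proj 1 := zero_mul' x
  orthomodular := fun a b h => by
    apply Subtype.ext
    have hA := memK s hs a
    have hB := memK s hs b
    have hab : (a : S) = (b : S) * (a : S) := h
    have hab' : (a : S) = (a : S) * (b : S) := by
      have hd := congrArg dag hab
      rwa [dag_mul, kDag hsd hA, kDag hsd hB] at hd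
    -- b commutes with s * proj a
    have hba : (b : S) * proj (a : S) = proj (a : S) * (b : S) :=
      starComm (kDag hsd hB) hab'.symm
    have hcm : (b : S) * (s * proj (a : S)) = (s * proj (a : S)) * (b : S) := by
      calc (b : S) * (s * proj (a : S)) = ((b : S) * s) * proj (a : S) := by
            simp only [mul_assoc]
        _ = (b : S) * proj (a : S) := by rw [kMulS hs hsd hB]
        _ = (s * (b : S)) * proj (a : S) := by rw [sMulK hs hB]
        _ = s * ((b : S) * proj (a : S)) := by simp only [mul_assoc]
        _ = s * (proj (a : S) * (b : S)) := by rw [hba]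
        _ = (s * proj (a : S)) * (b : S) := by simp only [mul_assoc]
    have hocA : IsK s (s * proj (a : S)) := oc_isK (kMulS hs hsd hA)
    have hcK := commK hs hsd hB hocA hcm
    have hcIsK : IsK s ((b : S) * (s * proj (a : S))) := hcK.2
    -- d := infK (ocK a) b, show its coe equals c
    have md := meet_aux hs hsd (memK s hs (ocK s hs hsd a)) hB
    have m1d : (infK s hs hsd (ocK s hs hsd a) b : S)
        = (s * proj (a : S)) * (infK s hs hsd (ocK s hs hsd a) b : S) := by
      rw [coe_infK]; rw [coe_ocK] at md ⊢; exact md.2.2.1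
    have m2d : (infK s hs hsd (ocK s hs hsd a) b : S)
        = (b : S) * (infK s hs hsd (ocK s hs hsd a) b : S) := by
      rw [coe_infK]; rw [coe_ocK] at md ⊢; exact md.2.2.2.1
    have m3d := md.2.2.2.2
    have hdmem : IsK s (infK s hs hsd (ocK s hs hsd a) b : S) :=
      memK s hs _
    have cd : (infK s hs hsd (ocK s hs hsd a) b : S)
        = ((b : S) * (s * proj (a : S))) * (infK s hs hsd (ocK s hs hsd a) b : S) := by
      calc (infK s hs hsd (ocK s hs hsd a) b : S)
          = (b : S) * (infK s hs hsd (ocK s hs hsd a) b : S) := m2d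
        _ = (b : S) * ((s * proj (a : S)) * (infK s hs hsd (ocK s hs hsd a) b : S)) := by
            rw [← m1d]
        _ = ((b : S) * (s * proj (a : S))) * (infK s hs hsd (ocK s hs hsd a) b : S) := by
            simp only [mul_assoc]
    have hc1 : (b : S) * (s * proj (a : S))
        = (s * proj (a : S)) * ((b : S) * (s * proj (a : S))) := by
      calc (b : S) * (s * proj (a : S))
          = (s * proj (a : S)) * (b : S) := hcm
        _ = ((s * proj (a : S)) * (s * proj (a : S))) * (b : S) := by
            rw [kIdem hs hsd hocA]
        _ = (s * proj (a : S)) * ((s * proj (a : S)) * (b : S)) := by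
            simp only [mul_assoc]
        _ = (s * proj (a : S)) * ((b : S) * (s * proj (a : S))) := by rw [← hcm]
    have hc2 : (b : S) * (s * proj (a : S))
        = (b : S) * ((b : S) * (s * proj (a : S))) := by
      conv_rhs => rw [← mul_assoc, kIdem hs hsd hB]
    have dc : (b : S) * (s * proj (a : S))
        = (infK s hs hsd (ocK s hs hsd a) b : S) * ((b : S) * (s * proj (a : S))) := by
      have := m3d ((b : S) * (s * proj (a : S))) hcIsK
        (by rw [coe_ocK]; exact hc1) hc2
      rw [coe_infK]
      exact this
    have hdc : (infK s hs hsd (ocK s hs hsd a) b : S) = (b : S) * (s * proj (a : S)) :=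
      antisymK hsd hdmem hcIsK cd dc
    -- w := coe (infK (ocK a) (ocK d))
    have mw := meet_aux hs hsd (memK s hs (ocK s hs hsd a))
      (memK s hs (ocK s hs hsd (infK s hs hsd (ocK s hs hsd a) b)))
    set d := infK s hs hsd (ocK s hs hsd a) b with hd_def
    set w := (infK s hs hsd (ocK s hs hsd a) (ocK s hs hsd d) : S) with hw_def
    have hwmem : IsK s w := memK s hs _
    have mw1 : w = (s * proj (a : S)) * w := by
      rw [hw_def, coe_infK]; rw [coe_ocK] at mw ⊢; exact mw.2.2.1
    have mw2 : w = (s * proj (d : S)) * w := by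
      rw [hw_def, coe_infK]
      have := mw.2.2.2.1
      rw [coe_ocK, coe_ocK] at this ⊢
      exact this
    have mw3 := mw.2.2.2.2
    have hwd : dag w = w := kDag hsd hwmem
    have hw1' : w = w * (s * proj (a : S)) := by
      have hd2 := congrArg dag mw1
      rwa [dag_mul, hwd, oc_dag hsd (kMulS hs hsd hA)] at hd2
    have hw2' : w = w * (s * proj (d : S)) := by
      have hd2 := congrArg dag mw2
      rwa [dag_mul, hwd, oc_dag hsd (kMulS hs hsd (memK s hs d))] at hd2
    -- (i) b ≤ sup
    have hwb : w * (b : S) = proj 1 := by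
      calc w * (b : S) = (w * (s * proj (a : S))) * (b : S) := by rw [← hw1']
        _ = w * ((s * proj (a : S)) * (b : S)) := by simp only [mul_assoc]
        _ = w * ((b : S) * (s * proj (a : S))) := by rw [← hcm]
        _ = w * (d : S) := by rw [← hdc]
        _ = (w * (s * proj (d : S))) * (d : S) := by rw [← hw2']
        _ = w * ((s * proj (d : S)) * (d : S)) := by simp only [mul_assoc]
        _ = w * proj 1 := by
            rw [oc_mul hsd (kMulS hs hsd (memK s hs d)) (kDag hsd (memK s hs d))]
        _ = proj 1 := mul_zero' w
    have bsup : (b : S) = (s * proj w) * (b : S) :=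
      (galois hs hsd (kMulS hs hsd hwmem) hB).1 hwb
    -- (ii) sup ≤ b
    have hob1 : s * proj (b : S) = (s * proj (a : S)) * (s * proj (b : S)) :=
      antitone' hs hsd hA hB hab
    have hob2 : s * proj (b : S) = (s * proj (d : S)) * (s * proj (b : S)) :=
      antitone' hs hsd (memK s hs d) hB m2d
    have hwo : s * proj (b : S) = w * (s * proj (b : S)) := by
      have := mw3 (s * proj (b : S)) (oc_isK (kMulS hs hsd hB))
        (by rw [coe_ocK]; exact hob1) (by rw [coe_ocK]; exact hob2)
      rw [hw_def, coe_infK]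
      exact this
    have supb : s * proj w = (b : S) * (s * proj w) := by
      have h4 := antitone' hs hsd (oc_isK (kMulS hs hsd hB)) hwmem hwo
      rwa [closureC hs hsd hB] at h4
    exact antisymK hsd hB (oc_isK (kMulS hs hsd hwmem)) bsup supb }

end Inst
end FoulisKernel

open FoulisSemigroup in
/-- For a self-adjoint idempotent s in a Foulis semigroup S, the set
K_s = {s·⟦t·s⟧ : t ∈ S} is an orthomodular lattice, ordered by k₁ ≤ k₂ iff
k₁ = k₂·k₁, with top s, orthocomplement kᗮ = s·⟦k⟧ and meet
k₁ ⊓ k₂ = (k₁·⟦⟦k₂⟧·k₁⟧)^⊥⊥; moreover every element of K_s is a self-adjoint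
idempotent. -/
theorem foulis_kernel_lattice (S : Type*) [FoulisSemigroup S] (s : S)
    (hs : s * s = s) (hsd : dag s = s) :
    (∀ k : {k : S // ∃ t : S, k = s * proj (t * s)},
      (k : S) * (k : S) = (k : S) ∧ dag (k : S) = (k : S)) ∧
    ∃ inst : OrthomodularLattice {k : S // ∃ t : S, k = s * proj (t * s)},
      letI := inst
      (∀ k₁ k₂ : {k : S // ∃ t : S, k = s * proj (t * s)},
        k₁ ≤ k₂ ↔ (k₁ : S) = (k₂ : S) * (k₁ : S)) ∧
      (((⊤ : {k : S // ∃ t : S, k = s * proj (t * s)}) : S) = s) ∧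
      (∀ k : {k : S // ∃ t : S, k = s * proj (t * s)},
        ((kᗮ : {k : S // ∃ t : S, k = s * proj (t * s)}) : S) = s * proj (k : S)) ∧
      (∀ k₁ k₂ : {k : S // ∃ t : S, k = s * proj (t * s)},
        ((k₁ ⊓ k₂ : {k : S // ∃ t : S, k = s * proj (t * s)}) : S) =
          s * proj (s * proj ((k₁ : S) * proj (proj (k₂ : S) * (k₁ : S))))) := by
  refine ⟨?_, ⟨FoulisKernel.foulisOML s hs hsd, ?_, ?_, ?_, ?_⟩⟩
  · intro k
    exact ⟨FoulisKernel.kIdem hs hsd (FoulisKernel.memK s hs k),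
      FoulisKernel.kDag hsd (FoulisKernel.memK s hs k)⟩
  · intro k₁ k₂
    exact Iff.rfl
  · rfl
  · intro k
    rfl
  · intro k₁ k₂
    exact ((FoulisKernel.meet_aux hs hsd (FoulisKernel.memK s hs k₁)
      (FoulisKernel.memK s hs k₂)).2.1).symm
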